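/- Let (M, φ, ξ, η, g) be a nearly Sasakian manifold with h defined by ∇_X ξ = −φX + hX, and fix a real number r. Then there exists a unique linear connection ∇̄ on M with ∇̄φ = 0, ∇̄ξ = 0, ∇̄η = 0, ∇̄g = 0 whose torsion T̄ satisfies: (1) T̄ is totally skew-symmetric on the distribution D = ker(η), i.e. g(T̄(X,Y),Z) is skew-symmetric in X, Y, Z ∈ D; and (2) the (1,1)-tensor τ defined by τX = T̄(ξ, X) satisfies τφ + φτ = −2(r+1)φ². This connection is ∇̄_X Y = ∇_X Y + H(X,Y) with H(X,Y) = (1/2)(∇_X φ)φY − r η(X)φY + η(Y)(φ − h)X − (1/2)g((φ − h)X, Y)ξ. -/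

import Mathlib

/-!
An algebraic model of the differential calculus on a (parallelizable) smooth
manifold: `M` is the type of points, `V` is the model for the tangent spaces,
smooth functions are modelled by maps `M → ℝ` and vector fields by maps
`M → V`.  The data consists of the directional derivative `D` of functions,
the Lie bracket `lie` of vector fields, a Riemannian metric `g` and its
Levi-Civita connection `nabla` (characterized, as usual, by being the unique
metric torsion-free connection).
-/

noncomputable section

structure RGeo (M V : Type) [AddCommGroup V] [Module ℝ V] : Type where
  D : (M → V) → (M → ℝ) → (M → ℝ)
  lie : (M → V) → (M → V) → (M → V)
  g : M → V →ₗ[ℝ] V →ₗ[ℝ] ℝ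
  nabla : (M → V) → (M → V) → (M → V)
  g_symm : ∀ x u v, g x u v = g x v u
  g_posdef : ∀ x (v : V), v ≠ 0 → 0 < g x v v
  D_add_fun : ∀ X f₁ f₂, D X (f₁ + f₂) = D X f₁ + D X f₂
  D_mul_fun : ∀ X f₁ f₂, D X (f₁ * f₂) = f₁ * D X f₂ + f₂ * D X f₁
  D_const : ∀ X (c : ℝ), D X (fun _ => c) = 0
  D_add_vf : ∀ X Y f, D (X + Y) f = D X f + D Y f
  D_smul_vf : ∀ (f : M → ℝ) X φ, D (fun x => f x • X x) φ = f * D X φ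
  lie_antisymm : ∀ X Y, lie X Y = -(lie Y X)
  lie_add_left : ∀ X Y Z, lie (X + Y) Z = lie X Z + lie Y Z
  lie_leibniz : ∀ X (f : M → ℝ) Y,
    lie X (fun x => f x • Y x) = fun x => D X f x • Y x + f x • lie X Y x
  D_lie : ∀ X Y f, D (lie X Y) f = D X (D Y f) - D Y (D X f)
  nabla_add_left : ∀ X Y Z, nabla (X + Y) Z = nabla X Z + nabla Y Z
  nabla_smul_left : ∀ (f : M → ℝ) X Y,
    nabla (fun x => f x • X x) Y = fun x => f x • nabla X Y x
  nabla_add_right : ∀ X Y Z, nabla X (Y + Z) = nabla X Y + nabla X Z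
  nabla_leibniz : ∀ X (f : M → ℝ) Y,
    nabla X (fun x => f x • Y x) = fun x => D X f x • Y x + f x • nabla X Y x
  torsion_free : ∀ X Y, (fun x => nabla X Y x - nabla Y X x) = lie X Y
  metric_compat : ∀ X Y Z,
    D X (fun x => g x (Y x) (Z x)) =
      fun x => g x (nabla X Y x) (Z x) + g x (Y x) (nabla X Z x)

namespace RGeo

variable {M V : Type} [AddCommGroup V] [Module ℝ V]

/-- The metric evaluated on two vector fields. -/
def gf (Γ : RGeo M V) (X Y : M → V) : M → ℝ := fun x => Γ.g x (X x) (Y x)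

/-- Application of a `(1,1)`-tensor field to a vector field. -/
def tapp (A : M → V →ₗ[ℝ] V) (X : M → V) : M → V := fun x => A x (X x)

/-- The covariant derivative `(∇_X A) Y` of a `(1,1)`-tensor field `A`. -/
def covDer (Γ : RGeo M V) (A : M → V →ₗ[ℝ] V) (X Y : M → V) : M → V :=
  fun x => Γ.nabla X (tapp A Y) x - A x (Γ.nabla X Y x)

/-- The constant vector field with value `v`. -/
def cst (M : Type) {V : Type} [AddCommGroup V] [Module ℝ V] (v : V) : M → V := fun _ => v

/-- The Riemann curvature operator `R(X,Y)Z`. -/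
def curv (Γ : RGeo M V) (X Y Z : M → V) : M → V :=
  fun x => Γ.nabla X (Γ.nabla Y Z) x - Γ.nabla Y (Γ.nabla X Z) x - Γ.nabla (Γ.lie X Y) Z x

/-- A family of vectors is orthonormal at the point `x`. -/
def OrthonormalAt (Γ : RGeo M V) (x : M) {n : ℕ} (e : Fin n → V) : Prop :=
  ∀ i j, Γ.g x (e i) (e j) = if i = j then (1 : ℝ) else 0

/-- The Ricci tensor at `x`, computed with respect to a frame orthonormal at `x`. -/
def ricciAt (Γ : RGeo M V) (x : M) {n : ℕ} (e : Fin n → V) (u v : V) : ℝ :=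
  ∑ i, Γ.g x (curv Γ (cst M (e i)) (cst M u) (cst M v) x) (e i)

/-- The scalar curvature at `x`, computed with respect to a frame orthonormal at `x`. -/
def scalarAt (Γ : RGeo M V) (x : M) {n : ℕ} (e : Fin n → V) : ℝ :=
  ∑ i, ∑ j, Γ.g x (curv Γ (cst M (e i)) (cst M (e j)) (cst M (e j)) x) (e i)

/-- Exterior derivative of a 1-form (given by its values on vector fields). -/
def dOne (Γ : RGeo M V) (a : (M → V) → M → ℝ) (X Y : M → V) : M → ℝ :=
  Γ.D X (a Y) - Γ.D Y (a X) - a (Γ.lie X Y)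

/-- Exterior derivative of a 2-form (given by its values on vector fields). -/
def dTwo (Γ : RGeo M V) (ω : (M → V) → (M → V) → M → ℝ) (X Y Z : M → V) : M → ℝ :=
  Γ.D X (ω Y Z) - Γ.D Y (ω X Z) + Γ.D Z (ω X Y)
    - ω (Γ.lie X Y) Z + ω (Γ.lie X Z) Y - ω (Γ.lie Y Z) X

/-- Exterior derivative of a 3-form (given by its values on vector fields). -/
def dThree (Γ : RGeo M V) (c : (M → V) → (M → V) → (M → V) → M → ℝ)
    (X Y Z W : M → V) : M → ℝ :=
  Γ.D X (c Y Z W) - Γ.D Y (c X Z W) + Γ.D Z (c X Y W) - Γ.D W (c X Y Z)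
    - c (Γ.lie X Y) Z W + c (Γ.lie X Z) Y W - c (Γ.lie X W) Y Z
    - c (Γ.lie Y Z) X W + c (Γ.lie Y W) X Z - c (Γ.lie Z W) X Y

/-- Wedge product of a 1-form and a 2-form, on vector fields. -/
def w12 (a : (M → V) → M → ℝ) (b : (M → V) → (M → V) → M → ℝ)
    (X Y Z : M → V) : M → ℝ :=
  a X * b Y Z - a Y * b X Z + a Z * b X Y

/-- Wedge product of two 2-forms, on vector fields. -/
def w22 (b c : (M → V) → (M → V) → M → ℝ) (X Y Z W : M → V) : M → ℝ :=
  b X Y * c Z W - b X Z * c Y W + b X W * c Y Z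
    + b Y Z * c X W - b Y W * c X Z + b Z W * c X Y

/-- An almost contact metric structure `(φ, ξ, η, g)`. -/
structure ACMS (Γ : RGeo M V) : Type where
  phi : M → V →ₗ[ℝ] V
  xi : M → V
  eta : M → V →ₗ[ℝ] ℝ
  phi_sq : ∀ x (v : V), phi x (phi x v) = -v + eta x v • xi x
  eta_xi : ∀ x, eta x (xi x) = 1
  metric_phi : ∀ x (u v : V),
    Γ.g x (phi x u) (phi x v) = Γ.g x u v - eta x u * eta x v

variable {Γ : RGeo M V}

/-- `η` evaluated on vector fields. -/
def ACMS.etaf (S : ACMS Γ) : (M → V) → M → ℝ := fun X x => S.eta x (X x)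

/-- `φ` applied to a vector field. -/
def ACMS.phif (S : ACMS Γ) : (M → V) → M → V := fun X x => S.phi x (X x)

/-- The fundamental 2-form `Φ(X,Y) = g(φX, Y)`, on vector fields. -/
def ACMS.omegaf (S : ACMS Γ) : (M → V) → (M → V) → M → ℝ :=
  fun X Y x => Γ.g x (S.phi x (X x)) (Y x)

/-- Nearly Sasakian structure: `(∇_X φ)Y + (∇_Y φ)X = 2g(X,Y)ξ − η(X)Y − η(Y)X`. -/
def ACMS.IsNearlySasakian (S : ACMS Γ) : Prop :=
  ∀ X Y : M → V, ∀ x,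
    covDer Γ S.phi X Y x + covDer Γ S.phi Y X x
      = (2 * Γ.g x (X x) (Y x)) • S.xi x - S.eta x (X x) • Y x - S.eta x (Y x) • X x

/-- Sasakian structure: `(∇_X φ)Y = g(X,Y)ξ − η(Y)X`. -/
def ACMS.IsSasakian (S : ACMS Γ) : Prop :=
  ∀ X Y : M → V, ∀ x,
    covDer Γ S.phi X Y x = Γ.g x (X x) (Y x) • S.xi x - S.eta x (Y x) • X x

/-- Nearly cosymplectic structure: `(∇_X φ)Y + (∇_Y φ)X = 0`. -/
def ACMS.IsNearlyCosymplectic (S : ACMS Γ) : Prop :=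
  ∀ X Y : M → V, ∀ x, covDer Γ S.phi X Y x + covDer Γ S.phi Y X x = 0

/-- coKähler structure: `∇φ = 0`. -/
def ACMS.IsCoKaehler (S : ACMS Γ) : Prop :=
  ∀ X Y : M → V, ∀ x, covDer Γ S.phi X Y x = 0

/-- Nearly α-Sasakian structure. -/
def ACMS.IsNearlyAlphaSasakian (S : ACMS Γ) (α : ℝ) : Prop :=
  ∀ X Y : M → V, ∀ x,
    covDer Γ S.phi X Y x + covDer Γ S.phi Y X x
      = α • ((2 * Γ.g x (X x) (Y x)) • S.xi x - S.eta x (X x) • Y x - S.eta x (Y x) • X x)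

/-- `h` is the tensor of the nearly Sasakian structure `S`: `∇_X ξ = −φX + hX`. -/
def ACMS.IsNSTensor (S : ACMS Γ) (h : M → V →ₗ[ℝ] V) : Prop :=
  ∀ X : M → V, ∀ x, Γ.nabla X S.xi x = -(S.phi x (X x)) + h x (X x)

/-- `h` is the tensor of the nearly cosymplectic structure `S`: `∇_X ξ = hX`. -/
def ACMS.IsNCTensor (S : ACMS Γ) (h : M → V →ₗ[ℝ] V) : Prop :=
  ∀ X : M → V, ∀ x, Γ.nabla X S.xi x = h x (X x)

/-- A vector field is a section of a distribution. -/
def Sect (Dst : M → Submodule ℝ V) (X : M → V) : Prop := ∀ x, X x ∈ Dst x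

/-- A distribution is integrable (involutive). -/
def IsIntegrable (Γ : RGeo M V) (Dst : M → Submodule ℝ V) : Prop :=
  ∀ X Y, Sect Dst X → Sect Dst Y → Sect Dst (Γ.lie X Y)

/-- A distribution defines a totally geodesic foliation: it is closed under
covariant differentiation along its own sections. -/
def IsTotallyGeodesic (Γ : RGeo M V) (Dst : M → Submodule ℝ V) : Prop :=
  ∀ X Y, Sect Dst X → Sect Dst Y → Sect Dst (Γ.nabla X Y)

/-- The eigendistribution of `h²` for the eigenvalue `μ`. -/
def eigD (h : M → V →ₗ[ℝ] V) (μ : ℝ) : M → Submodule ℝ V :=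
  fun x => Module.End.eigenspace (h x ∘ₗ h x) μ

/-- `(i,j,k)` is an even permutation of `(1,2,3)` (here of `(0,1,2)`). -/
def EvenPerm (i j k : Fin 3) : Prop :=
  (i, j, k) = (0, 1, 2) ∨ (i, j, k) = (1, 2, 0) ∨ (i, j, k) = (2, 0, 1)

/-- An `SU(2)`-structure on a 5-manifold, described by three almost contact
metric structures sharing `ξ`, `η`, `g` and satisfying the quaternionic
relations `φᵢφⱼ = φₖ = −φⱼφᵢ` for even permutations `(i,j,k)`. -/
structure SU2Triple (Γ : RGeo M V) : Type where
  S : Fin 3 → ACMS Γ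
  same_xi : ∀ i j, (S i).xi = (S j).xi
  same_eta : ∀ i j, (S i).eta = (S j).eta
  quat : ∀ i j k, EvenPerm i j k → ∀ x (v : V),
    (S i).phi x ((S j).phi x v) = (S k).phi x v ∧
    (S j).phi x ((S i).phi x v) = -((S k).phi x v)

/-- The tensor field `N_φ = [φ,φ] + dη ⊗ ξ`. -/
def nijenhuis (Γ : RGeo M V) (A : M → V →ₗ[ℝ] V) (eta : M → V →ₗ[ℝ] ℝ) (xi : M → V)
    (X Y : M → V) : M → V :=
  fun x => A x (A x (Γ.lie X Y x)) + Γ.lie (tapp A X) (tapp A Y) x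
    - A x (Γ.lie (tapp A X) Y x) - A x (Γ.lie X (tapp A Y) x)
    + dOne Γ (fun Z y => eta y (Z y)) X Y x • xi x

/-- Pointwise wedge product of two 2-forms on `V`, evaluated on four vectors. -/
def wedge22At (b c : V →ₗ[ℝ] V →ₗ[ℝ] ℝ) (p q r s : V) : ℝ :=
  b p q * c r s - b p r * c q s + b p s * c q r
    + b q r * c p s - b q s * c p r + b r s * c p q

/-- Pointwise wedge product of a 4-form and a 1-form on `V`, on five vectors. -/
def wedge41At (v4 : V → V → V → V → ℝ) (a : V →ₗ[ℝ] ℝ) (p q r s t : V) : ℝ :=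
  a p * v4 q r s t - a q * v4 p r s t + a r * v4 p q s t
    - a s * v4 p q r t + a t * v4 p q r s

end RGeo

/-- The data `(η, ω₁, ω₂, ω₃)` of a candidate `SU(2)`-structure on a 5-manifold:
a 1-form and three 2-forms (given pointwise). -/
structure SU2Forms (M V : Type) [AddCommGroup V] [Module ℝ V] : Type where
  eta : M → V →ₗ[ℝ] ℝ
  omega : Fin 3 → M → V →ₗ[ℝ] V →ₗ[ℝ] ℝ
  omega_alt : ∀ i x v, omega i x v v = 0

namespace SU2Forms

variable {M V : Type} [AddCommGroup V] [Module ℝ V]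

/-- `(η, ω₁, ω₂, ω₃)` is an `SU(2)`-structure: `ωᵢ ∧ ωⱼ = δᵢⱼ v` for a 4-form
`v` with `v ∧ η ≠ 0`, and `X⌟ω₁ = Y⌟ω₂` implies `ω₃(X,Y) ≥ 0`. -/
def IsSU2 (F : SU2Forms M V) : Prop :=
  (∃ v4 : M → V → V → V → V → ℝ,
    (∀ i j x p q r s, RGeo.wedge22At (F.omega i x) (F.omega j x) p q r s
        = (if i = j then (1 : ℝ) else 0) * v4 x p q r s) ∧
    (∀ x, ∃ p q r s t, RGeo.wedge41At (v4 x) (F.eta x) p q r s t ≠ 0)) ∧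
  (∀ x (u w : V), (∀ z, F.omega 0 x u z = F.omega 1 x w z) → 0 ≤ F.omega 2 x u w)

/-- `η` evaluated on vector fields. -/
def etaf (F : SU2Forms M V) : (M → V) → M → ℝ := fun X x => F.eta x (X x)

/-- `ωᵢ` evaluated on vector fields. -/
def omegaf (F : SU2Forms M V) (i : Fin 3) : (M → V) → (M → V) → M → ℝ :=
  fun X Y x => F.omega i x (X x) (Y x)

end SU2Forms

namespace RGeo

variable {M V : Type} [AddCommGroup V] [Module ℝ V]

/-- A linear connection on `(M, V, Γ)`. -/
structure ConnOf (Γ : RGeo M V) : Type where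
  nb : (M → V) → (M → V) → (M → V)
  nb_add_left : ∀ X Y Z, nb (X + Y) Z = nb X Z + nb Y Z
  nb_smul_left : ∀ (f : M → ℝ) X Y, nb (fun x => f x • X x) Y = fun x => f x • nb X Y x
  nb_add_right : ∀ X Y Z, nb X (Y + Z) = nb X Y + nb X Z
  nb_leibniz : ∀ X (f : M → ℝ) Y,
    nb X (fun x => f x • Y x) = fun x => Γ.D X f x • Y x + f x • nb X Y x

/-- The torsion of a linear connection. -/
def ConnOf.tors {Γ : RGeo M V} (C : ConnOf Γ) (X Y : M → V) : M → V :=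
  fun x => C.nb X Y x - C.nb Y X x - Γ.lie X Y x

/-- The connection parallelizes all the structure tensors `g`, `ξ`, `φ`, `η`. -/
def ConnOf.Parallelizes {Γ : RGeo M V} (C : ConnOf Γ) (S : ACMS Γ) : Prop :=
  (∀ X Y Z, Γ.D X (Γ.gf Y Z)
      = fun x => Γ.g x (C.nb X Y x) (Z x) + Γ.g x (Y x) (C.nb X Z x)) ∧
  (∀ X x, C.nb X S.xi x = 0) ∧
  (∀ X Y x, C.nb X (tapp S.phi Y) x = S.phi x (C.nb X Y x)) ∧
  (∀ X Y, Γ.D X (S.etaf Y) = fun x => S.eta x (C.nb X Y x))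

end RGeo

namespace RGeo

variable {M V : Type} [AddCommGroup V] [Module ℝ V]

/-- The conditions of the canonical connection of a nearly Sasakian manifold:
it parallelizes all the structure tensors, its torsion is totally
skew-symmetric on `D = ker η`, and the tensor `τX = T̄(ξ,X)` satisfies
`τφ + φτ = −2(r+1)φ²`. -/
def IsCanonicalConn (Γ : RGeo M V) (S : ACMS Γ) (r : ℝ) (C : ConnOf Γ) : Prop :=
  C.Parallelizes S ∧
  (∀ X Y Z : M → V, Sect (fun x => LinearMap.ker (S.eta x)) X →
    Sect (fun x => LinearMap.ker (S.eta x)) Y →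
    Sect (fun x => LinearMap.ker (S.eta x)) Z → ∀ x,
      Γ.g x (C.tors X Y x) (Z x) = -(Γ.g x (C.tors X Z x) (Y x))) ∧
  (∀ X : M → V, ∀ x,
    C.tors S.xi (tapp S.phi X) x + S.phi x (C.tors S.xi X x)
      = (-(2 * (r + 1))) • S.phi x (S.phi x (X x)))

end RGeo

/-!
The tensor `H` is chosen so that `∇ + H` parallelizes `g`, `ξ`, `φ` and `η`; the two torsion
conditions then follow from the nearly Sasakian identities `(∇_ξ φ) = φh`, `hξ = 0`, `hφ = -φh`
and the skew-adjointness of `∇_X φ`. For uniqueness, the difference `κ` of two such connections is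
a tensor with `κ(·, ξ) = κ(ξ, ·) = 0`, each `κ(a, ·)` skew-adjoint and commuting with `φ`, and
`g(κ(a, b), c)` totally skew on `D = ker η`; such a form is forced to vanish.
-/

namespace RGeo

variable {M V : Type} [AddCommGroup V] [Module ℝ V]

lemma eq_zero_of_g_self_eq_zero (Γ : RGeo M V) {x : M} {v : V} (hv : Γ.g x v v = 0) :
    v = 0 := by
  by_contra hne
  exact (Γ.g_posdef x v hne).ne' hv

-- Tensoriality: `Y = Y' + f • (Y - Y')` for the indicator `f` of `{x}ᶜ`, and `f x = 0`.
lemma apply_congr_of_funLinear {T : (M → V) → M → V}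
    (hadd : ∀ Y Z, T (Y + Z) = T Y + T Z)
    (hsmul : ∀ (f : M → ℝ) Y, T (fun y => f y • Y y) = fun y => f y • T Y y)
    {Y Y' : M → V} {x : M} (hx : Y x = Y' x) : T Y x = T Y' x := by
  classical
  set f : M → ℝ := fun y => if y = x then 0 else 1
  have hY : Y = Y' + fun y => f y • (Y y - Y' y) := by
    funext y
    by_cases hyx : y = x
    · subst hyx; simp [f, hx]
    · simp [f, hyx]
  rw [hY, hadd, hsmul]
  simp [f]

lemma tapp_apply (A : M → V →ₗ[ℝ] V) (X : M → V) (x : M) : tapp A X x = A x (X x) := rfl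

lemma D_neg (Γ : RGeo M V) (X : M → V) (f : M → ℝ) : Γ.D X (-f) = -Γ.D X f := by
  have h := Γ.D_add_fun X f (-f)
  rw [add_neg_cancel, show (0 : M → ℝ) = fun _ => 0 from rfl, Γ.D_const] at h
  exact (neg_eq_of_add_eq_zero_right h.symm).symm

lemma nabla_const_smul_right (Γ : RGeo M V) (X Y : M → V) (c : ℝ) :
    Γ.nabla X (fun y => c • Y y) = fun y => c • Γ.nabla X Y y := by
  simp [Γ.nabla_leibniz X (fun _ => c) Y, Γ.D_const]

lemma nabla_zero_right (Γ : RGeo M V) (X : M → V) : Γ.nabla X 0 = 0 := by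
  simpa using Γ.nabla_add_right X 0 0

lemma covDer_add_left (Γ : RGeo M V) (A : M → V →ₗ[ℝ] V) (X X' Y : M → V) :
    covDer Γ A (X + X') Y = covDer Γ A X Y + covDer Γ A X' Y := by
  funext x
  simp only [covDer, Γ.nabla_add_left, Pi.add_apply, map_add]
  abel

lemma covDer_smul_left (Γ : RGeo M V) (A : M → V →ₗ[ℝ] V) (f : M → ℝ) (X Y : M → V) :
    covDer Γ A (fun y => f y • X y) Y = fun x => f x • covDer Γ A X Y x := by
  funext x
  simp only [covDer, Γ.nabla_smul_left, map_smul, smul_sub]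

lemma covDer_add_right (Γ : RGeo M V) (A : M → V →ₗ[ℝ] V) (X Y Z : M → V) :
    covDer Γ A X (Y + Z) = covDer Γ A X Y + covDer Γ A X Z := by
  have ht : tapp A (Y + Z) = tapp A Y + tapp A Z := by
    funext y; simp [tapp]
  funext x
  simp only [covDer, ht, Γ.nabla_add_right, Pi.add_apply, map_add]
  abel

lemma covDer_smul_right (Γ : RGeo M V) (A : M → V →ₗ[ℝ] V) (X : M → V) (f : M → ℝ)
    (Y : M → V) :
    covDer Γ A X (fun y => f y • Y y) = fun x => f x • covDer Γ A X Y x := by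
  have ht : tapp A (fun y => f y • Y y) = fun y => f y • tapp A Y y := by
    funext y; simp [tapp]
  funext x
  simp only [covDer, ht, Γ.nabla_leibniz]
  simp only [tapp_apply, map_add, map_smul, smul_sub]
  abel

lemma covDer_zero_right (Γ : RGeo M V) (A : M → V →ₗ[ℝ] V) (X : M → V) :
    covDer Γ A X 0 = 0 := by
  simpa using Γ.covDer_add_right A X 0 0

namespace ACMS

variable {Γ : RGeo M V} (S : ACMS Γ)

section

variable (x : M)

/-- Compute `φ³ v` by applying `φ² = -1 + η ⊗ ξ` on either side of `φ`. -/
lemma eta_phi_smul_xi (v : V) : S.eta x (S.phi x v) • S.xi x = S.eta x v • S.phi x (S.xi x) := by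
  have h := congrArg (S.phi x) (S.phi_sq x v)
  rw [map_add, map_neg, map_smul, S.phi_sq] at h
  exact add_left_cancel h

lemma phi_xi : S.phi x (S.xi x) = 0 := by
  set t := S.eta x (S.phi x (S.xi x))
  have hξ : t • S.xi x = S.phi x (S.xi x) := by
    simpa [S.eta_xi] using S.eta_phi_smul_xi x (S.xi x)
  have ht : t * t = 0 := by
    have h := congrArg (S.phi x) hξ
    rw [map_smul, S.phi_sq, S.eta_xi, one_smul, neg_add_cancel, ← hξ, smul_smul] at h
    simpa [S.eta_xi] using congrArg (S.eta x) h
  rw [← hξ, mul_self_eq_zero.mp ht, zero_smul]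

lemma eta_phi (v : V) : S.eta x (S.phi x v) = 0 := by
  simpa [S.phi_xi, S.eta_xi] using congrArg (S.eta x) (S.eta_phi_smul_xi x v)

lemma g_xi_right (u : V) : Γ.g x u (S.xi x) = S.eta x u := by
  have h := S.metric_phi x u (S.xi x)
  simp only [S.phi_xi, S.eta_xi, map_zero, mul_one] at h
  linarith

lemma g_xi_left (u : V) : Γ.g x (S.xi x) u = S.eta x u := by
  rw [Γ.g_symm, g_xi_right]

lemma g_phi_left (u v : V) : Γ.g x (S.phi x u) v = -Γ.g x u (S.phi x v) := by
  have h := S.metric_phi x u (S.phi x v)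
  simp only [S.phi_sq, S.eta_phi, map_add, map_neg, map_smul, smul_eq_mul, g_xi_right,
    mul_zero, sub_zero] at h
  linarith

lemma eta_sub_eta_smul_xi (v : V) : S.eta x (v - S.eta x v • S.xi x) = 0 := by
  simp [S.eta_xi]

lemma eq_zero_of_phi_eq_zero {v : V} (hφ : S.phi x v = 0) (hη : S.eta x v = 0) : v = 0 := by
  simpa [hφ, hη] using S.phi_sq x v

/-- On `D = ker η` the form `g(κ a b, c)` is skew in `(b, c)` and in `(a, c)`, hence totally skew,
and `φ` moves from its second to its third slot with a sign change; moving `φ` from the first to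
the third slot both ways round gives opposite results. -/
lemma g_bilin_eq_zero_of_eta_eq_zero (κ : V →ₗ[ℝ] V →ₗ[ℝ] V)
    (hmetric : ∀ a b c, Γ.g x (κ a b) c = -Γ.g x (κ a c) b)
    (hphi : ∀ a b, κ a (S.phi x b) = S.phi x (κ a b))
    (hswap : ∀ a b c, S.eta x a = 0 → S.eta x b = 0 → S.eta x c = 0 →
      Γ.g x (κ a b) c = -Γ.g x (κ c b) a)
    {a b c : V} (ha : S.eta x a = 0) (hb : S.eta x b = 0) (hc : S.eta x c = 0) :
    Γ.g x (κ a b) c = 0 := by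
  have hφ : ∀ a b c, Γ.g x (κ a (S.phi x b)) c = -Γ.g x (κ a b) (S.phi x c) := fun a b c => by
    rw [hphi, S.g_phi_left]
  have hmove : ∀ {a b c}, S.eta x a = 0 → S.eta x b = 0 → S.eta x c = 0 →
      Γ.g x (κ (S.phi x a) b) c = Γ.g x (κ a b) (S.phi x c) := fun {a b c} ha hb hc => by
    linarith [hswap (S.phi x a) b c (S.eta_phi x a) hb hc, hφ c b a,
      hswap c (S.phi x b) a hc (S.eta_phi x b) ha, hφ a b c]
  have hφc : ∀ {c}, S.eta x c = 0 → Γ.g x (κ a b) (S.phi x c) = 0 := fun {c} hc => by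
    linarith [hmove ha hb hc, hmetric (S.phi x a) b c, hmove ha hc hb, hφ a c b,
      hmetric a (S.phi x c) b]
  have hc' : c = S.phi x (-S.phi x c) := by
    rw [map_neg, S.phi_sq, hc, zero_smul, add_zero, neg_neg]
  rw [hc']
  exact hφc (by rw [map_neg, S.eta_phi, neg_zero])

lemma bilin_eq_zero (κ : V →ₗ[ℝ] V →ₗ[ℝ] V)
    (hxi_left : ∀ b, κ (S.xi x) b = 0) (hxi_right : ∀ a, κ a (S.xi x) = 0)
    (hmetric : ∀ a b c, Γ.g x (κ a b) c = -Γ.g x (κ a c) b)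
    (hphi : ∀ a b, κ a (S.phi x b) = S.phi x (κ a b))
    (hswap : ∀ a b c, S.eta x a = 0 → S.eta x b = 0 → S.eta x c = 0 →
      Γ.g x (κ a b) c = -Γ.g x (κ c b) a) :
    κ = 0 := by
  have hdec : ∀ v, v = (v - S.eta x v • S.xi x) + S.eta x v • S.xi x := fun v => by
    rw [sub_add_cancel]
  have hκ : ∀ a b, κ a b = κ (a - S.eta x a • S.xi x) (b - S.eta x b • S.xi x) := by
    intro a b
    conv_lhs => rw [hdec a, hdec b]
    simp only [map_add, map_smul, LinearMap.add_apply, LinearMap.smul_apply, hxi_left,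
      hxi_right, smul_zero, add_zero]
  have hg : ∀ a b c, Γ.g x (κ a b) c = 0 := by
    intro a b c
    rw [hκ, hdec c, map_add, map_smul, hmetric _ _ (S.xi x), hxi_right,
      S.g_bilin_eq_zero_of_eta_eq_zero x κ hmetric hphi hswap (S.eta_sub_eta_smul_xi x a)
        (S.eta_sub_eta_smul_xi x b) (S.eta_sub_eta_smul_xi x c)]
    simp
  ext a b
  exact Γ.eq_zero_of_g_self_eq_zero (hg a b _)

end

lemma tapp_phi_xi : tapp S.phi S.xi = 0 := funext S.phi_xi

lemma tapp_phi_phi (Y : M → V) :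
    tapp S.phi (tapp S.phi Y) = (fun y => (-1 : ℝ) • Y y) + fun y => S.eta y (Y y) • S.xi y := by
  funext y
  simp only [tapp, Pi.add_apply, S.phi_sq]
  module

lemma g_covDer_phi_left (X Y Z : M → V) (x : M) :
    Γ.g x (covDer Γ S.phi X Y x) (Z x) = -Γ.g x (Y x) (covDer Γ S.phi X Z x) := by
  have e1 := congrFun (Γ.metric_compat X (tapp S.phi Y) Z) x
  have e2 := congrFun (Γ.metric_compat X Y (tapp S.phi Z)) x
  have e3 : (fun y => Γ.g y (tapp S.phi Y y) (Z y)) = -fun y => Γ.g y (Y y) (tapp S.phi Z y) := by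
    funext y
    simp only [tapp, S.g_phi_left, Pi.neg_apply]
  have e4 := congrFun (Γ.D_neg X fun y => Γ.g y (Y y) (tapp S.phi Z y)) x
  rw [← e3] at e4
  have p1 := S.g_phi_left x (Γ.nabla X Y x) (Z x)
  have p2 := S.g_phi_left x (Y x) (Γ.nabla X Z x)
  simp only [covDer, tapp, map_sub, LinearMap.sub_apply, Pi.neg_apply] at e1 e2 e4 ⊢
  linear_combination -e1 + e4 - e2 - p1 - p2

namespace IsNSTensor

variable {S} {h : M → V →ₗ[ℝ] V}

/-- Differentiate `g(ξ, ξ) = 1`. -/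
lemma eta_h (hh : S.IsNSTensor h) (x : M) (v : V) : S.eta x (h x v) = 0 := by
  have hc := congrFun (Γ.metric_compat (cst M v) S.xi S.xi) x
  have hone : (fun y => Γ.g y (S.xi y) (S.xi y)) = fun _ => 1 := by
    funext y; rw [S.g_xi_right, S.eta_xi]
  rw [hone, Γ.D_const, hh (cst M v) x] at hc
  simp only [Pi.zero_apply, cst, map_add, map_neg, LinearMap.add_apply, LinearMap.neg_apply,
    S.g_xi_right, S.g_xi_left, S.eta_phi] at hc
  linarith

lemma covDer_xi_right (hh : S.IsNSTensor h) (X : M → V) (x : M) :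
    covDer Γ S.phi X S.xi x = S.phi x (S.phi x (X x)) - S.phi x (h x (X x)) := by
  simp only [covDer, S.tapp_phi_xi, Γ.nabla_zero_right, hh X x, map_add, map_neg,
    Pi.zero_apply]
  abel

/-- Differentiate `φ² = -1 + η ⊗ ξ`. -/
lemma covDer_phi_phi_add_phi_covDer_phi (hh : S.IsNSTensor h) (X Y : M → V) (x : M) :
    covDer Γ S.phi X (tapp S.phi Y) x + S.phi x (covDer Γ S.phi X Y x)
      = Γ.g x (h x (X x) - S.phi x (X x)) (Y x) • S.xi x
        + S.eta x (Y x) • (h x (X x) - S.phi x (X x)) := by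
  have hη : Γ.D X (fun y => S.eta y (Y y)) x
      = Γ.g x (Γ.nabla X S.xi x) (Y x) + S.eta x (Γ.nabla X Y x) := by
    have heq : (fun y => S.eta y (Y y)) = fun y => Γ.g y (S.xi y) (Y y) := by
      funext y; rw [S.g_xi_left]
    rw [heq, congrFun (Γ.metric_compat X S.xi Y) x, S.g_xi_left]
  simp only [covDer, map_sub, S.tapp_phi_phi, Γ.nabla_add_right, Pi.add_apply,
    Γ.nabla_const_smul_right, Γ.nabla_leibniz, hη, hh X x, S.phi_sq]
  simp only [map_add, map_neg, LinearMap.add_apply, LinearMap.neg_apply, LinearMap.sub_apply]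
  module

lemma covDer_xi_left (hh : S.IsNSTensor h) (hNS : S.IsNearlySasakian) (X : M → V) (x : M) :
    covDer Γ S.phi S.xi X x = S.phi x (h x (X x)) := by
  have hsum := hNS S.xi X x
  rw [hh.covDer_xi_right X x, S.eta_xi, S.g_xi_left, S.phi_sq] at hsum
  linear_combination (norm := module) hsum

lemma h_xi (hh : S.IsNSTensor h) (hNS : S.IsNearlySasakian) (x : M) : h x (S.xi x) = 0 := by
  have hright := hh.covDer_xi_right S.xi x
  rw [hh.covDer_xi_left hNS S.xi x, S.phi_xi, map_zero, zero_sub] at hright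
  have hφ : S.phi x (h x (S.xi x)) = 0 := by
    linear_combination (norm := module) (1 / 2 : ℝ) • hright
  exact S.eq_zero_of_phi_eq_zero x hφ (hh.eta_h x _)

-- At `X = ξ` the derivative of `φ²` reads `φ h φ = h`.
lemma h_phi (hh : S.IsNSTensor h) (hNS : S.IsNearlySasakian) (x : M) (v : V) :
    h x (S.phi x v) = -S.phi x (h x v) := by
  have hI := hh.covDer_phi_phi_add_phi_covDer_phi S.xi (cst M v) x
  rw [hh.covDer_xi_left hNS, hh.covDer_xi_left hNS, hh.h_xi hNS, S.phi_xi] at hI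
  simp only [tapp_apply, cst, S.phi_sq, hh.eta_h, sub_zero, map_zero, LinearMap.zero_apply,
    zero_smul, smul_zero, add_zero] at hI
  have hφ := congrArg (S.phi x) hI
  rw [map_add, S.phi_sq, hh.eta_h, map_neg, map_zero, zero_smul, add_zero] at hφ
  linear_combination (norm := module) -hφ

end IsNSTensor

end ACMS

namespace ConnOf

variable {Γ : RGeo M V}

lemma ext {C C' : ConnOf Γ} (h : C.nb = C'.nb) : C = C' := by
  cases C; cases C'; cases h; rfl

lemma nb_congr_left (C : ConnOf Γ) {X X' : M → V} (Y : M → V) {x : M} (hx : X x = X' x) :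
    C.nb X Y x = C.nb X' Y x :=
  apply_congr_of_funLinear (T := fun W => C.nb W Y) (fun A B => C.nb_add_left A B Y)
    (fun f A => C.nb_smul_left f A Y) hx

lemma sub_nb_congr_right (C₁ C₂ : ConnOf Γ) (X : M → V) {Y Y' : M → V} {x : M}
    (hy : Y x = Y' x) : C₁.nb X Y x - C₂.nb X Y x = C₁.nb X Y' x - C₂.nb X Y' x :=
  apply_congr_of_funLinear (T := fun W y => C₁.nb X W y - C₂.nb X W y)
    (fun A B => by
      funext y
      simp only [C₁.nb_add_right, C₂.nb_add_right, Pi.add_apply]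
      abel)
    (fun f A => by
      funext y
      simp only [C₁.nb_leibniz, C₂.nb_leibniz, smul_sub]
      abel)
    hy

def diffAt (C₁ C₂ : ConnOf Γ) (x : M) : V →ₗ[ℝ] V →ₗ[ℝ] V :=
  LinearMap.mk₂ ℝ (fun a b => C₁.nb (cst M a) (cst M b) x - C₂.nb (cst M a) (cst M b) x)
    (fun a a' b => by
      simp only [show cst M (a + a') = cst M a + cst M a' from rfl, C₁.nb_add_left,
        C₂.nb_add_left, Pi.add_apply]
      abel)
    (fun s a b => by
      rw [show cst M (s • a) = fun y => (fun _ => s) y • cst M a y from rfl, C₁.nb_smul_left,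
        C₂.nb_smul_left, smul_sub])
    (fun a b b' => by
      simp only [show cst M (b + b') = cst M b + cst M b' from rfl, C₁.nb_add_right,
        C₂.nb_add_right, Pi.add_apply]
      abel)
    (fun s a b => by
      rw [show cst M (s • b) = fun y => (fun _ => s) y • cst M b y from rfl, C₁.nb_leibniz,
        C₂.nb_leibniz, Γ.D_const]
      simp only [Pi.zero_apply, zero_smul, zero_add, smul_sub])

lemma diffAt_apply (C₁ C₂ : ConnOf Γ) (x : M) (a b : V) :
    C₁.diffAt C₂ x a b = C₁.nb (cst M a) (cst M b) x - C₂.nb (cst M a) (cst M b) x := rfl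

lemma sub_nb_eq_diffAt (C₁ C₂ : ConnOf Γ) (X Y : M → V) (x : M) :
    C₁.nb X Y x - C₂.nb X Y x = C₁.diffAt C₂ x (X x) (Y x) := by
  rw [C₁.nb_congr_left Y (show X x = cst M (X x) x from rfl),
    C₂.nb_congr_left Y (show X x = cst M (X x) x from rfl),
    sub_nb_congr_right C₁ C₂ _ (show Y x = cst M (Y x) x from rfl)]
  rfl

lemma sub_tors (C₁ C₂ : ConnOf Γ) (X Y : M → V) (x : M) :
    C₁.tors X Y x - C₂.tors X Y x = C₁.diffAt C₂ x (X x) (Y x) - C₁.diffAt C₂ x (Y x) (X x) := by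
  rw [← sub_nb_eq_diffAt, ← sub_nb_eq_diffAt]
  simp only [tors]
  abel

end ConnOf

section

variable {Γ : RGeo M V} (S : ACMS Γ) (h : M → V →ₗ[ℝ] V) (r : ℝ)

def canonicalNabla (X Y : M → V) : M → V := fun x =>
  Γ.nabla X Y x
    + (1 / 2 : ℝ) • covDer Γ S.phi X (tapp S.phi Y) x
    - (r * S.eta x (X x)) • S.phi x (Y x)
    + S.eta x (Y x) • (S.phi x (X x) - h x (X x))
    - (1 / 2 * Γ.g x (S.phi x (X x) - h x (X x)) (Y x)) • S.xi x

lemma canonicalNabla_add_left (X X' Y : M → V) :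
    canonicalNabla S h r (X + X') Y = canonicalNabla S h r X Y + canonicalNabla S h r X' Y := by
  funext x
  simp only [canonicalNabla, Pi.add_apply, Γ.nabla_add_left, Γ.covDer_add_left, map_add,
    map_sub, LinearMap.add_apply, LinearMap.sub_apply]
  module

lemma canonicalNabla_smul_left (f : M → ℝ) (X Y : M → V) :
    canonicalNabla S h r (fun y => f y • X y) Y = fun x => f x • canonicalNabla S h r X Y x := by
  funext x
  simp only [canonicalNabla, Γ.nabla_smul_left, Γ.covDer_smul_left, map_smul,
    map_sub, LinearMap.smul_apply, LinearMap.sub_apply, smul_eq_mul]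
  module

lemma canonicalNabla_add_right (X Y Z : M → V) :
    canonicalNabla S h r X (Y + Z) = canonicalNabla S h r X Y + canonicalNabla S h r X Z := by
  have ht : tapp S.phi (Y + Z) = tapp S.phi Y + tapp S.phi Z := by
    funext y; simp [tapp]
  funext x
  simp only [canonicalNabla, Pi.add_apply, Γ.nabla_add_right, ht, Γ.covDer_add_right, map_add]
  module

lemma canonicalNabla_leibniz (X : M → V) (f : M → ℝ) (Y : M → V) :
    canonicalNabla S h r X (fun x => f x • Y x)
      = fun x => Γ.D X f x • Y x + f x • canonicalNabla S h r X Y x := by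
  have ht : tapp S.phi (fun y => f y • Y y) = fun y => f y • tapp S.phi Y y := by
    funext y; simp [tapp]
  funext x
  simp only [canonicalNabla, Γ.nabla_leibniz, ht, Γ.covDer_smul_right, map_smul, smul_eq_mul]
  module

def canonicalConnection : ConnOf Γ where
  nb := canonicalNabla S h r
  nb_add_left := canonicalNabla_add_left S h r
  nb_smul_left := canonicalNabla_smul_left S h r
  nb_add_right := canonicalNabla_add_right S h r
  nb_leibniz := canonicalNabla_leibniz S h r

end

section

variable {Γ : RGeo M V} {S : ACMS Γ} {h : M → V →ₗ[ℝ] V} (r : ℝ)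

lemma canonicalNabla_g (hh : S.IsNSTensor h) (X Y Z : M → V) :
    Γ.D X (Γ.gf Y Z) = fun x =>
      Γ.g x (canonicalNabla S h r X Y x) (Z x) + Γ.g x (Y x) (canonicalNabla S h r X Z x) := by
  funext x
  have hmc := congrFun (Γ.metric_compat X Y Z) x
  have hI := congrArg (fun w => Γ.g x w (Z x)) (hh.covDer_phi_phi_add_phi_covDer_phi X Y x)
  have h5 := S.g_covDer_phi_left X Y (tapp S.phi Z) x
  have p0 := S.g_phi_left x (covDer Γ S.phi X Y x) (Z x)
  have p1 := S.g_phi_left x (Y x) (Z x)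
  have s1 := Γ.g_symm x (Y x) (S.phi x (X x))
  have s2 := Γ.g_symm x (Y x) (h x (X x))
  rw [show Γ.gf Y Z = fun y => Γ.g y (Y y) (Z y) from rfl, hmc]
  simp only [canonicalNabla, tapp_apply, map_add, map_sub, map_smul, LinearMap.add_apply,
    LinearMap.sub_apply, LinearMap.smul_apply, smul_eq_mul, S.g_xi_right,
    S.g_xi_left] at hI h5 p0 p1 ⊢
  linear_combination (-(1 / 2)) * hI + (1 / 2) * p0 - (1 / 2) * h5
    + (r * S.eta x (X x)) * p1 - (S.eta x (Z x)) * s1 + (S.eta x (Z x)) * s2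

lemma canonicalNabla_xi (hh : S.IsNSTensor h) (X : M → V) (x : M) :
    canonicalNabla S h r X S.xi x = 0 := by
  have hg : Γ.g x (S.phi x (X x) - h x (X x)) (S.xi x) = 0 := by
    simp [S.g_xi_right, S.eta_phi, hh.eta_h]
  simp only [canonicalNabla, S.tapp_phi_xi, Γ.covDer_zero_right, hh X x, S.eta_xi, S.phi_xi,
    hg, Pi.zero_apply]
  module

lemma canonicalNabla_phi (hh : S.IsNSTensor h) (X Y : M → V) (x : M) :
    canonicalNabla S h r X (tapp S.phi Y) x = S.phi x (canonicalNabla S h r X Y x) := by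
  have e1 : Γ.nabla X (tapp S.phi Y) x = covDer Γ S.phi X Y x + S.phi x (Γ.nabla X Y x) := by
    simp only [covDer]; abel
  have e2 : covDer Γ S.phi X (tapp S.phi (tapp S.phi Y)) x
      = (-1 : ℝ) • covDer Γ S.phi X Y x
        + S.eta x (Y x) • (S.phi x (S.phi x (X x)) - S.phi x (h x (X x))) := by
    rw [S.tapp_phi_phi, Γ.covDer_add_right, Pi.add_apply, Γ.covDer_smul_right,
      Γ.covDer_smul_right]
    simp only [hh.covDer_xi_right]
  have e3 := hh.covDer_phi_phi_add_phi_covDer_phi X (tapp S.phi Y) x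
  simp only [canonicalNabla, tapp_apply, S.eta_phi] at e3 ⊢
  rw [e1, e2]
  rw [e2] at e3
  simp only [map_sub, map_add, map_smul, LinearMap.sub_apply, zero_smul, add_zero,
    S.phi_xi] at e3 ⊢
  linear_combination (norm := module) (-(1 / 2) : ℝ) • e3

lemma canonicalNabla_eta (hh : S.IsNSTensor h) (X Y : M → V) :
    Γ.D X (S.etaf Y) = fun x => S.eta x (canonicalNabla S h r X Y x) := by
  have heq : S.etaf Y = Γ.gf S.xi Y := by
    funext y; simp [ACMS.etaf, gf, S.g_xi_left]
  rw [heq, canonicalNabla_g r hh X S.xi Y]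
  funext x
  simp [canonicalNabla_xi r hh X x, S.g_xi_left]

lemma canonicalConnection_parallelizes (hh : S.IsNSTensor h) :
    (canonicalConnection S h r).Parallelizes S :=
  ⟨canonicalNabla_g r hh, canonicalNabla_xi r hh, canonicalNabla_phi r hh,
    canonicalNabla_eta r hh⟩

lemma ACMS.IsNSTensor.g_covDer_phi_phi_antisymm (hh : S.IsNSTensor h) (X Y Z : M → V) (x : M)
    (hY : S.eta x (Y x) = 0) (hZ : S.eta x (Z x) = 0) :
    Γ.g x (covDer Γ S.phi X (tapp S.phi Y) x) (Z x)
      = -Γ.g x (covDer Γ S.phi X (tapp S.phi Z) x) (Y x) := by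
  have a := S.g_covDer_phi_left X (tapp S.phi Y) Z x
  have b := S.g_phi_left x (Y x) (covDer Γ S.phi X Z x)
  have c := congrArg (fun w => Γ.g x w (Y x)) (hh.covDer_phi_phi_add_phi_covDer_phi X Z x)
  have sy := Γ.g_symm x (Y x) (S.phi x (covDer Γ S.phi X Z x))
  simp only [map_add, map_smul, LinearMap.add_apply, LinearMap.smul_apply, smul_eq_mul,
    tapp_apply, S.g_xi_left, hY, hZ, mul_zero, zero_mul, add_zero] at a c
  linear_combination a - b + c + sy

lemma ACMS.IsNearlySasakian.g_covDer_phi_phi_antisymm (hNS : S.IsNearlySasakian)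
    (X Y Z : M → V) (x : M) (hY : S.eta x (Y x) = 0) (hZ : S.eta x (Z x) = 0) :
    Γ.g x (covDer Γ S.phi Y (tapp S.phi X) x) (Z x)
      = -Γ.g x (covDer Γ S.phi Z (tapp S.phi X) x) (Y x) := by
  have n1 := congrArg (fun w => Γ.g x w (Z x)) (hNS Y (tapp S.phi X) x)
  have n2 := congrArg (fun w => Γ.g x w (Y x)) (hNS Z (tapp S.phi X) x)
  have sk := S.g_covDer_phi_left (tapp S.phi X) Y Z x
  have sy := Γ.g_symm x (Y x) (covDer Γ S.phi (tapp S.phi X) Z x)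
  simp only [map_add, map_sub, map_smul, LinearMap.add_apply, LinearMap.sub_apply,
    LinearMap.smul_apply, smul_eq_mul, tapp_apply, S.g_xi_left, S.eta_phi, hY, hZ,
    mul_zero, zero_mul, sub_zero] at n1 n2
  linear_combination n1 + n2 - sk + sy

lemma canonicalConnection_tors (X Y : M → V) (x : M) :
    (canonicalConnection S h r).tors X Y x =
      ((1 / 2 : ℝ) • covDer Γ S.phi X (tapp S.phi Y) x
        - (r * S.eta x (X x)) • S.phi x (Y x)
        + S.eta x (Y x) • (S.phi x (X x) - h x (X x))
        - (1 / 2 * Γ.g x (S.phi x (X x) - h x (X x)) (Y x)) • S.xi x)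
      - ((1 / 2 : ℝ) • covDer Γ S.phi Y (tapp S.phi X) x
        - (r * S.eta x (Y x)) • S.phi x (X x)
        + S.eta x (X x) • (S.phi x (Y x) - h x (Y x))
        - (1 / 2 * Γ.g x (S.phi x (Y x) - h x (Y x)) (X x)) • S.xi x) := by
  simp only [ConnOf.tors, canonicalConnection, canonicalNabla, ← Γ.torsion_free X Y]
  abel

lemma canonicalConnection_tors_skew (hh : S.IsNSTensor h) (hNS : S.IsNearlySasakian)
    (X Y Z : M → V) (x : M)
    (hX : S.eta x (X x) = 0) (hY : S.eta x (Y x) = 0) (hZ : S.eta x (Z x) = 0) :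
    Γ.g x ((canonicalConnection S h r).tors X Y x) (Z x)
      = -Γ.g x ((canonicalConnection S h r).tors X Z x) (Y x) := by
  have hφ := hh.g_covDer_phi_phi_antisymm X Y Z x hY hZ
  have hdir := hNS.g_covDer_phi_phi_antisymm X Y Z x hY hZ
  rw [canonicalConnection_tors, canonicalConnection_tors]
  simp only [map_add, map_sub, map_smul, LinearMap.add_apply, LinearMap.sub_apply,
    LinearMap.smul_apply, smul_eq_mul, S.g_xi_left, hX, hY, hZ, mul_zero, zero_mul]
  linear_combination (1 / 2) * hφ - (1 / 2) * hdir

lemma canonicalConnection_tors_xi (hh : S.IsNSTensor h) (hNS : S.IsNearlySasakian)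
    (U : M → V) (x : M) :
    (canonicalConnection S h r).tors S.xi U x
      = (1 / 2 : ℝ) • S.phi x (h x (S.phi x (U x))) - r • S.phi x (U x)
        - (S.phi x (U x) - h x (U x)) := by
  have hg : Γ.g x (S.phi x (U x) - h x (U x)) (S.xi x) = 0 := by
    simp [S.g_xi_right, S.eta_phi, hh.eta_h]
  rw [canonicalConnection_tors, hh.covDer_xi_left hNS, tapp_apply, S.tapp_phi_xi,
    Γ.covDer_zero_right, S.eta_xi, S.phi_xi, hh.h_xi hNS, hg]
  simp only [sub_self, map_zero, LinearMap.zero_apply, smul_zero, zero_smul, mul_zero,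
    Pi.zero_apply]
  module

lemma canonicalConnection_tau (hh : S.IsNSTensor h) (hNS : S.IsNearlySasakian)
    (X : M → V) (x : M) :
    (canonicalConnection S h r).tors S.xi (tapp S.phi X) x
        + S.phi x ((canonicalConnection S h r).tors S.xi X x)
      = (-(2 * (r + 1))) • S.phi x (S.phi x (X x)) := by
  have e1 : h x (S.phi x (S.phi x (X x))) = -h x (X x) := by
    simp [S.phi_sq, hh.h_xi hNS]
  have e2 : S.phi x (S.phi x (h x (S.phi x (X x)))) = -h x (S.phi x (X x)) := by
    rw [S.phi_sq, hh.eta_h, zero_smul, add_zero]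
  rw [canonicalConnection_tors_xi r hh hNS, canonicalConnection_tors_xi r hh hNS, tapp_apply]
  simp only [map_sub, map_smul, e1, map_neg]
  rw [e2, hh.h_phi hNS]
  module

lemma isCanonicalConn_canonicalConnection (hh : S.IsNSTensor h) (hNS : S.IsNearlySasakian) :
    IsCanonicalConn Γ S r (canonicalConnection S h r) :=
  ⟨canonicalConnection_parallelizes r hh,
    fun X Y Z hX hY hZ x => canonicalConnection_tors_skew r hh hNS X Y Z x (hX x) (hY x) (hZ x),
    canonicalConnection_tau r hh hNS⟩

end

section

variable {Γ : RGeo M V} {S : ACMS Γ} {C₁ C₂ : ConnOf Γ}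

namespace ConnOf.Parallelizes

lemma g_diffAt (h₁ : C₁.Parallelizes S) (h₂ : C₂.Parallelizes S) (x : M) (a b c : V) :
    Γ.g x (C₁.diffAt C₂ x a b) c = -Γ.g x (C₁.diffAt C₂ x a c) b := by
  have e₁ := congrFun (h₁.1 (cst M a) (cst M b) (cst M c)) x
  have e₂ := congrFun (h₂.1 (cst M a) (cst M b) (cst M c)) x
  have s₁ := Γ.g_symm x b (C₁.nb (cst M a) (cst M c) x)
  have s₂ := Γ.g_symm x b (C₂.nb (cst M a) (cst M c) x)
  simp only [cst] at e₁ e₂ s₁ s₂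
  simp only [ConnOf.diffAt_apply, map_sub, LinearMap.sub_apply]
  linarith

lemma diffAt_xi_right (h₁ : C₁.Parallelizes S) (h₂ : C₂.Parallelizes S) (x : M) (a : V) :
    C₁.diffAt C₂ x a (S.xi x) = 0 := by
  rw [show a = cst M a x from rfl, ← ConnOf.sub_nb_eq_diffAt, h₁.2.1, h₂.2.1, sub_zero]

lemma diffAt_phi_right (h₁ : C₁.Parallelizes S) (h₂ : C₂.Parallelizes S) (x : M) (a b : V) :
    C₁.diffAt C₂ x a (S.phi x b) = S.phi x (C₁.diffAt C₂ x a b) := by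
  rw [show a = cst M a x from rfl, show S.phi x b = tapp S.phi (cst M b) x from rfl,
    ← ConnOf.sub_nb_eq_diffAt, h₁.2.2.1, h₂.2.2.1, ← map_sub, ConnOf.sub_nb_eq_diffAt]
  rfl

end ConnOf.Parallelizes

namespace IsCanonicalConn

variable {r : ℝ}

/-- The `τ`-conditions give `κ ξ (φ b) + φ (κ ξ b) = 0`, while `κ ξ` commutes with `φ`. -/
lemma diffAt_xi_left (h₁ : IsCanonicalConn Γ S r C₁) (h₂ : IsCanonicalConn Γ S r C₂) (x : M)
    (b : V) : C₁.diffAt C₂ x (S.xi x) b = 0 := by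
  have hφ : S.phi x (C₁.diffAt C₂ x (S.xi x) b) = 0 := by
    have hτ₁ := h₁.2.2 (cst M b) x
    have hτ₂ := h₂.2.2 (cst M b) x
    have t₁ := C₁.sub_tors C₂ S.xi (tapp S.phi (cst M b)) x
    have t₂ := congrArg (S.phi x) (C₁.sub_tors C₂ S.xi (cst M b) x)
    simp only [tapp_apply, cst, map_sub, h₁.1.diffAt_phi_right h₂.1,
      h₁.1.diffAt_xi_right h₂.1, sub_zero] at t₁ t₂
    linear_combination (norm := module) (1 / 2 : ℝ) • (hτ₁ - hτ₂ - t₁ - t₂)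
  refine S.eq_zero_of_phi_eq_zero x hφ ?_
  rw [← S.g_xi_right, h₁.1.g_diffAt h₂.1, h₁.1.diffAt_xi_right h₂.1, map_zero,
    LinearMap.zero_apply, neg_zero]

lemma diffAt_swap (h₁ : IsCanonicalConn Γ S r C₁) (h₂ : IsCanonicalConn Γ S r C₂) (x : M)
    {a b c : V} (ha : S.eta x a = 0) (hb : S.eta x b = 0) (hc : S.eta x c = 0) :
    Γ.g x (C₁.diffAt C₂ x a b) c = -Γ.g x (C₁.diffAt C₂ x c b) a := by
  set P : V → M → V := fun v y => v - S.eta y v • S.xi y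
  have hP : ∀ v, Sect (fun y => LinearMap.ker (S.eta y)) (P v) := fun v y =>
    LinearMap.mem_ker.mpr (S.eta_sub_eta_smul_xi y v)
  have hPx : ∀ {v}, S.eta x v = 0 → P v x = v := fun hv => by simp [P, hv]
  have s₁ := h₁.2.1 (P b) (P a) (P c) (hP b) (hP a) (hP c) x
  have s₂ := h₂.2.1 (P b) (P a) (P c) (hP b) (hP a) (hP c) x
  have t₁ := congrArg (fun w => Γ.g x w (P c x)) (C₁.sub_tors C₂ (P b) (P a) x)
  have t₂ := congrArg (fun w => Γ.g x w (P a x)) (C₁.sub_tors C₂ (P b) (P c) x)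
  simp only [hPx ha, hPx hb, hPx hc, map_sub, LinearMap.sub_apply] at s₁ s₂ t₁ t₂
  linarith [h₁.1.g_diffAt h₂.1 x b a c]

lemma unique (h₁ : IsCanonicalConn Γ S r C₁) (h₂ : IsCanonicalConn Γ S r C₂) : C₁ = C₂ := by
  refine ConnOf.ext (funext fun X => funext fun Y => funext fun x => ?_)
  have hκ := S.bilin_eq_zero x (C₁.diffAt C₂ x) (h₁.diffAt_xi_left h₂ x)
    (h₁.1.diffAt_xi_right h₂.1 x) (h₁.1.g_diffAt h₂.1 x) (h₁.1.diffAt_phi_right h₂.1 x)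
    (fun _ _ _ => h₁.diffAt_swap h₂ x)
  rw [← sub_eq_zero, C₁.sub_nb_eq_diffAt, hκ, LinearMap.zero_apply, LinearMap.zero_apply]

end IsCanonicalConn

end

end RGeo

open RGeo in
/-- Theorem.  On a nearly Sasakian manifold, for each real
number `r` there is a unique linear connection `∇̄` parallelizing all the
structure tensors, with torsion totally skew-symmetric on `D = ker η` and with
`τφ + φτ = −2(r+1)φ²`; it is given by `∇̄_X Y = ∇_X Y + H(X,Y)` with
`H(X,Y) = ½(∇_Xφ)φY − rη(X)φY + η(Y)(φ−h)X − ½g((φ−h)X,Y)ξ`. -/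
theorem nearlySasakian_canonical_connection {M V : Type}
    [AddCommGroup V] [Module ℝ V]
    (Γ : RGeo M V) (S : ACMS Γ) (h : M → V →ₗ[ℝ] V)
    (hNS : S.IsNearlySasakian) (hh : S.IsNSTensor h) (r : ℝ) :
    (∃! C : ConnOf Γ, IsCanonicalConn Γ S r C) ∧
    (∀ C : ConnOf Γ, IsCanonicalConn Γ S r C → ∀ X Y : M → V, ∀ x,
      C.nb X Y x = Γ.nabla X Y x
        + (1 / 2 : ℝ) • covDer Γ S.phi X (tapp S.phi Y) x
        - (r * S.eta x (X x)) • S.phi x (Y x)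
        + S.eta x (Y x) • (S.phi x (X x) - h x (X x))
        - (1 / 2 * Γ.g x (S.phi x (X x) - h x (X x)) (Y x)) • S.xi x) := by
  have hcan := isCanonicalConn_canonicalConnection r hh hNS
  refine ⟨⟨_, hcan, fun C hC => hC.unique hcan⟩, fun C hC X Y x => ?_⟩
  rw [hC.unique hcan]
  rfl
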